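/- Let μ₀, μ₁, μ₀′, μ₁′ ∈ P(𝕋^d), let (X₀, X₀′) be a coupling of μ₀K and μ₀′K and (X₁, X₁′) a coupling of μ₁K and μ₁′K, independent of each other. Then W_ρ(μ₀ Q_{μ₁}, μ₀′ Q_{μ₁′}) ≤ h · ( E[ρ(X₀,X₀′)] + (q₀/(1−q₁)) E[ρ(X₁,X₁′)] ), where h = 1 − min p + (aβ)^{-1} γ L_λ, and q_i = P(U < p(X_i) ∧ p(X_i′)) for i = 0,1 with U ~ Uniform([0,1]) independent of (X₀,X₀′,X₁,X₁′). -/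

import Mathlib

open MeasureTheory ProbabilityTheory Real Filter
open scoped ENNReal NNReal BigOperators

noncomputable section

/-- The flat `d`-dimensional torus. -/
abbrev Torus (d : ℕ) : Type := Fin d → AddCircle (1 : ℝ)

/-- Canonical projection from `ℝ^d` to the torus. -/
def Torus.proj {d : ℕ} (v : Fin d → ℝ) : Torus d := fun i => (v i : AddCircle (1 : ℝ))

/-- The geodesic (Euclidean) distance on the torus. -/
def tdist {d : ℕ} (x y : Torus d) : ℝ := Real.sqrt (∑ i, (dist (x i) (y i)) ^ 2)

/-- The corresponding `ℓ²` distance on `(𝕋^d)^N`. -/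
def tdistN {d N : ℕ} (x y : Fin N → Torus d) : ℝ := Real.sqrt (∑ i, (tdist (x i) (y i)) ^ 2)

/-- `b` is a `C¹` vector field on the torus: its periodic lift is `C¹`. -/
def IsC1Drift {d : ℕ} (b : Torus d → Fin d → ℝ) : Prop :=
  ContDiff ℝ 1 (fun v : Fin d → ℝ => b (Torus.proj v))

/-- `λ` is Lipschitz with constant `L` for the geodesic distance. -/
def LipDrift {d : ℕ} (L : ℝ) (lam : Torus d → ℝ) : Prop :=
  ∀ x y, |lam x - lam y| ≤ L * tdist x y

/-- The standard Gaussian distribution `N(0, I_d)` on `ℝ^d`. -/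
def stdGaussian (d : ℕ) : Measure (Fin d → ℝ) := Measure.pi fun _ => gaussianReal 0 1

/-- The exponential distribution `E(1)` on `ℝ`. -/
def expLaw : Measure ℝ := volume.withDensity (exponentialPDF 1)

/-- The uniform distribution on `[0,1]`. -/
def unifLaw : Measure ℝ := volume.restrict (Set.Icc (0 : ℝ) 1)

/-- The Euler–Maruyama transition kernel `K`:
`K(x,·)` is the law of `x + γ b(x) + √γ G` modulo `ℤ^d`, `G ~ N(0, I_d)`. -/
def eulerK {d : ℕ} (b : Torus d → Fin d → ℝ) (γ : ℝ) (x : Torus d) : Measure (Torus d) :=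
  (stdGaussian d).map (fun g => x + Torus.proj (fun i => γ * b x i + Real.sqrt γ * g i))

/-- The killing probability at `z`: `p(z) = 1 - exp(-γ λ(z))`. -/
def pkill {d : ℕ} (lam : Torus d → ℝ) (γ : ℝ) (z : Torus d) : ℝ :=
  1 - Real.exp (-(γ * lam z))

/-- The rebirth kernel `Q_μ`: `Q_μ(x,·)` is the law of `X_H` where `X₀ ~ K(x,·)`,
`X_k ~ μK` for `k ≥ 1`, `U_k ~ U([0,1])` all independent and
`H = inf {k | U_k ≥ p(X_k)}`.  It is given by the explicit formula
`Q_μ f (x) = K[f(1-p)](x) + ∑_{k ≥ 1} μK[f(1-p)] (μK p)^(k-1) K p(x)`. -/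
def Qker {d : ℕ} (b : Torus d → Fin d → ℝ) (lam : Torus d → ℝ) (γ : ℝ)
    (μ : Measure (Torus d)) (x : Torus d) : Measure (Torus d) :=
  (eulerK b γ x).withDensity (fun z => ENNReal.ofReal (1 - pkill lam γ z))
    + ((∫⁻ z, ENNReal.ofReal (pkill lam γ z) ∂(eulerK b γ x))
        * ∑' k : ℕ, (∫⁻ z, ENNReal.ofReal (pkill lam γ z) ∂(μ.bind (eulerK b γ))) ^ k)
      • ((μ.bind (eulerK b γ)).withDensity (fun z => ENNReal.ofReal (1 - pkill lam γ z)))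

/-- The nonlinear chain of laws `η_{n+1} = η_n Q_{η_n}`. -/
def etaChain {d : ℕ} (b : Torus d → Fin d → ℝ) (lam : Torus d → ℝ) (γ : ℝ)
    (η0 : Measure (Torus d)) : ℕ → Measure (Torus d)
  | 0 => η0
  | n + 1 => (etaChain b lam γ η0 n).bind (Qker b lam γ (etaChain b lam γ η0 n))

/-- The empirical measure `π(x) = N⁻¹ ∑ δ_{x_i}`. -/
def emp {d N : ℕ} (x : Fin N → Torus d) : Measure (Torus d) :=
  (N : ℝ≥0∞)⁻¹ • ∑ i, Measure.dirac (x i)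

/-- The mean-field particle kernel `R_{N,γ}(x,·) = ⊗_i Q_{π(x)}(x_i,·)`. -/
def Rker {d : ℕ} (b : Torus d → Fin d → ℝ) (lam : Torus d → ℝ) (γ : ℝ) {N : ℕ}
    (x : Fin N → Torus d) : Measure (Fin N → Torus d) :=
  Measure.pi fun i => Qker b lam γ (emp x) (x i)

/-- Iterated action of a kernel on a measure: `μ ↦ μ R^m`. -/
def iterK {E : Type*} [MeasurableSpace E] (R : E → Measure E) : ℕ → Measure E → Measure E
  | 0, μ => μ
  | m + 1, μ => (iterK R m μ).bind R

/-- The set of couplings of `μ` and `ν`. -/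
def Coupling {E : Type*} [MeasurableSpace E] (μ ν : Measure E) : Set (Measure (E × E)) :=
  {P | IsProbabilityMeasure P ∧ P.map Prod.fst = μ ∧ P.map Prod.snd = ν}

/-- The Wasserstein distance associated to a cost `ρ`:
`W_ρ(μ,ν) = inf { E[ρ(X,Y)] : X ~ μ, Y ~ ν }`. -/
def Wass {E : Type*} [MeasurableSpace E] (ρ : E → E → ℝ) (μ ν : Measure E) : ℝ :=
  sInf ((fun P : Measure (E × E) => ∫ z, ρ z.1 z.2 ∂P) '' Coupling μ ν)

/-- The distance `ρ(x,y) = (1 - e^{-a|x-y|})/a`. -/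
def rho {d : ℕ} (a : ℝ) (x y : Torus d) : ℝ := (1 - Real.exp (-a * tdist x y)) / a

/-- The distance `ρ_N(x,y) = ∑_i ρ(x_i,y_i)` on `(𝕋^d)^N`. -/
def rhoN {d : ℕ} (a : ℝ) {N : ℕ} (x y : Fin N → Torus d) : ℝ := ∑ i, rho a (x i) (y i)

/-- The rate `α(N)` of convergence of empirical measures. -/
def alphaRate (d N : ℕ) : ℝ :=
  if d = 1 then (N : ℝ) ^ (-(1/2 : ℝ))
  else if d = 2 then (N : ℝ) ^ (-(1/2 : ℝ)) * Real.log (1 + (N : ℝ))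
  else (N : ℝ) ^ (-(1 / (d : ℝ)))

/-- The contraction property of the Euler kernel in `W_ρ` (Majka's estimate). -/
def EulerContract {d : ℕ} (b : Torus d → Fin d → ℝ) (a c₁ γ₀ : ℝ) : Prop :=
  ∀ γ ∈ Set.Ioc (0 : ℝ) γ₀, ∀ μ ν : Measure (Torus d),
    IsProbabilityMeasure μ → IsProbabilityMeasure ν →
      Wass (rho a) (μ.bind (eulerK b γ)) (ν.bind (eulerK b γ)) ≤ (1 - c₁ * γ) * Wass (rho a) μ ν

/-- κ = c₁ - c₂ L_λ e^{γ ‖λ‖_∞}. -/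
def kap {d : ℕ} (lam : Torus d → ℝ) (c₁ c₂ L γ : ℝ) : ℝ :=
  c₁ - c₂ * L * Real.exp (γ * ⨆ z, lam z)

/-- The uniform contraction of the particle system `R_{N,γ}` in `W_{ρ_N}`. -/
def RContract {d : ℕ} (b : Torus d → Fin d → ℝ) (lam : Torus d → ℝ)
    (a c₁ c₂ L γ₀ : ℝ) : Prop :=
  ∀ γ ∈ Set.Ioc (0 : ℝ) γ₀, ∀ N : ℕ, ∀ μ ν : Measure (Fin N → Torus d),
    IsProbabilityMeasure μ → IsProbabilityMeasure ν →
      Wass (rhoN a) (μ.bind (Rker b lam γ)) (ν.bind (Rker b lam γ))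
        ≤ (1 - γ * kap lam c₁ c₂ L γ) * Wass (rhoN a) μ ν


/-!
Write `p` for the killing probability and `ν_i = μ_i K`. A particle of `μ₀ Q_{μ₁}` survives its
first step with probability `1 - p`; otherwise it is reborn, and restarting from `ν₁` until
survival makes it land with the law `R` of `ν₁ (1 - p)` normalised, so
`μ₀ Q_{μ₁} = ν₀ (1 - p) + (ν₀ p) R`.

Run two such particles from `(X₀, X₀')` with a common uniform variable: both survive with
probability `1 - max(p, p')`, both die with probability `min(p, p')`, in which case both restart
from a fresh copy of `(X₁, X₁')`, and when only one dies it is replaced by an independent sample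
of `R` (resp. `R'`). Survival costs at most `(1 - min p) ρ`; a one-sided death has probability
`|p - p'| ≤ γ L_λ |x - y| ≤ γ L_λ β⁻¹ ρ` and costs at most `1 / a`. The repeated joint deaths form
a geometric series, which produces the factor `q₀ / (1 - q₁)`.
-/

open Set

namespace ENNReal

lemma ofReal_one_sub_add_ofReal {x : ℝ} (h0 : 0 ≤ x) (h1 : x ≤ 1) :
    ENNReal.ofReal (1 - x) + ENNReal.ofReal x = 1 := by
  rw [← ENNReal.ofReal_add (by linarith) h0]
  norm_num

lemma ofReal_one_sub_max_add_ofReal_sub {x y : ℝ} (hy : y ≤ 1) :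
    ENNReal.ofReal (1 - max x y) + ENNReal.ofReal (y - x) = ENNReal.ofReal (1 - x) := by
  rcases le_total x y with h | h
  · rw [max_eq_right h, ← ENNReal.ofReal_add (by linarith) (by linarith)]
    ring_nf
  · rw [max_eq_left h, ENNReal.ofReal_of_nonpos (by linarith : y - x ≤ 0), add_zero]

lemma ofReal_sub_add_ofReal_min {x y : ℝ} (hy : 0 ≤ y) :
    ENNReal.ofReal (x - y) + ENNReal.ofReal (min x y) = ENNReal.ofReal x := by
  rcases le_total x y with h | h
  · rw [min_eq_left h, ENNReal.ofReal_of_nonpos (by linarith : x - y ≤ 0), zero_add]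
  · rw [min_eq_right h, ← ENNReal.ofReal_add (by linarith) hy]
    ring_nf

lemma ofReal_sub_add_ofReal_sub (x y : ℝ) :
    ENNReal.ofReal (y - x) + ENNReal.ofReal (x - y) = ENNReal.ofReal |x - y| := by
  rcases le_total x y with h | h
  · rw [ENNReal.ofReal_of_nonpos (by linarith : x - y ≤ 0), add_zero, abs_sub_comm,
      abs_of_nonneg (by linarith)]
  · rw [ENNReal.ofReal_of_nonpos (by linarith : y - x ≤ 0), zero_add, abs_of_nonneg (by linarith)]

end ENNReal

namespace MeasureTheory.Measure

variable {E F : Type*} [MeasurableSpace E] [MeasurableSpace F]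

lemma map_withDensity_comp (μ : Measure E) {f : E → F} {g : F → ℝ≥0∞}
    (hf : Measurable f) (hg : Measurable g) :
    (μ.withDensity (g ∘ f)).map f = (μ.map f).withDensity g := by
  ext s hs
  rw [map_apply hf hs, withDensity_apply _ (hf hs), withDensity_apply _ hs,
    setLIntegral_map hs hg hf]
  rfl

lemma lintegral_le_mul_measure_univ {μ : Measure E} {f : E → ℝ≥0∞} {M : ℝ≥0∞}
    (hf : ∀ x, f x ≤ M) : ∫⁻ x, f x ∂μ ≤ M * μ univ :=
  (lintegral_mono hf).trans_eq (lintegral_const M)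

end MeasureTheory.Measure

section Rebirth

variable {E : Type*} [MeasurableSpace E] (p : E → ℝ)

def survivingPart (ν : Measure E) : Measure E :=
  ν.withDensity fun z => ENNReal.ofReal (1 - p z)

def killedMass (ν : Measure E) : ℝ≥0∞ := ∫⁻ z, ENNReal.ofReal (p z) ∂ν

def rebornLaw (ν : Measure E) : Measure E := (1 - killedMass p ν)⁻¹ • survivingPart p ν

def rebirth (ν₀ ν₁ : Measure E) : Measure E :=
  survivingPart p ν₀ + killedMass p ν₀ • rebornLaw p ν₁

def jointKillMass (Γ : Measure (E × E)) : ℝ≥0∞ :=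
  ∫⁻ z, ENNReal.ofReal (min (p z.1) (p z.2)) ∂Γ

/-- A particle killed alone is replaced by an independent sample of `R` (resp. `R'`); the event
that both are killed is left out. -/
def killCoupling (R R' : Measure E) (Γ : Measure (E × E)) : Measure (E × E) :=
  Γ.withDensity (fun z => ENNReal.ofReal (1 - max (p z.1) (p z.2)))
    + ((Γ.withDensity fun z => ENNReal.ofReal (p z.2 - p z.1)).map Prod.fst).prod R'
    + R.prod ((Γ.withDensity fun z => ENNReal.ofReal (p z.1 - p z.2)).map Prod.snd)

/-- After each joint kill both particles restart from a fresh sample of `ΓB`; the geometric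
series of repeated joint kills gives the weight `q(ΓA) / (1 - q(ΓB))`. -/
def rebirthCoupling (ΓA ΓB : Measure (E × E)) : Measure (E × E) :=
  killCoupling p (rebornLaw p (ΓB.map Prod.fst)) (rebornLaw p (ΓB.map Prod.snd)) ΓA
    + (jointKillMass p ΓA * (1 - jointKillMass p ΓB)⁻¹)
      • killCoupling p (rebornLaw p (ΓB.map Prod.fst)) (rebornLaw p (ΓB.map Prod.snd)) ΓB

variable {p}

lemma survivingPart_univ_add_killedMass (hp : Measurable p) (hp0 : ∀ z, 0 ≤ p z)
    (hp1 : ∀ z, p z ≤ 1) (ν : Measure E) [IsProbabilityMeasure ν] :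
    survivingPart p ν univ + killedMass p ν = 1 := by
  rw [survivingPart, withDensity_apply _ MeasurableSet.univ, setLIntegral_univ, killedMass,
    ← lintegral_add_left (hp.const_sub 1).ennreal_ofReal]
  simp [ENNReal.ofReal_one_sub_add_ofReal (hp0 _) (hp1 _)]

lemma killedMass_lt_one (hp1 : ∀ z, p z < 1) (ν : Measure E) [IsProbabilityMeasure ν] :
    killedMass p ν < 1 := by
  have hfin : killedMass p ν ≠ ∞ := ne_top_of_le_ne_top ENNReal.one_ne_top <|
    (Measure.lintegral_le_mul_measure_univ (M := 1) fun z =>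
      ENNReal.ofReal_le_one.2 (hp1 z).le).trans_eq (by simp)
  calc killedMass p ν < ∫⁻ _, 1 ∂ν :=
        lintegral_strict_mono (IsProbabilityMeasure.ne_zero ν) aemeasurable_const hfin
          (ae_of_all _ fun z => ENNReal.ofReal_lt_one.2 (hp1 z))
    _ = 1 := by simp

lemma map_fst_killCoupling (hp : Measurable p) (hp1 : ∀ z, p z ≤ 1) (R R' : Measure E)
    [IsProbabilityMeasure R'] (Γ : Measure (E × E)) [SFinite Γ] :
    (killCoupling p R R' Γ).map Prod.fst
      = survivingPart p (Γ.map Prod.fst) + (∫⁻ z, ENNReal.ofReal (p z.1 - p z.2) ∂Γ) • R := by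
  have hsum : (fun z : E × E => ENNReal.ofReal (1 - max (p z.1) (p z.2)))
      + (fun z => ENNReal.ofReal (p z.2 - p z.1))
      = (fun x => ENNReal.ofReal (1 - p x)) ∘ Prod.fst :=
    funext fun z => ENNReal.ofReal_one_sub_max_add_ofReal_sub (hp1 z.2)
  have hdiff : Measurable fun z : E × E => ENNReal.ofReal (p z.2 - p z.1) :=
    ((hp.comp measurable_snd).sub (hp.comp measurable_fst)).ennreal_ofReal
  rw [killCoupling, Measure.map_add _ _ measurable_fst, Measure.map_add _ _ measurable_fst,
    Measure.map_fst_prod, Measure.map_fst_prod, measure_univ, one_smul,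
    Measure.map_apply measurable_snd MeasurableSet.univ, preimage_univ,
    withDensity_apply _ MeasurableSet.univ, setLIntegral_univ, ← Measure.map_add _ _ measurable_fst,
    ← withDensity_add_right _ hdiff, hsum,
    Measure.map_withDensity_comp _ measurable_fst (hp.const_sub 1).ennreal_ofReal, survivingPart]

lemma map_snd_killCoupling (hp : Measurable p) (hp1 : ∀ z, p z ≤ 1) (R R' : Measure E)
    [IsProbabilityMeasure R] [SFinite R'] (Γ : Measure (E × E)) [SFinite Γ] :
    (killCoupling p R R' Γ).map Prod.snd
      = survivingPart p (Γ.map Prod.snd) + (∫⁻ z, ENNReal.ofReal (p z.2 - p z.1) ∂Γ) • R' := by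
  have hsum : (fun z : E × E => ENNReal.ofReal (1 - max (p z.1) (p z.2)))
      + (fun z => ENNReal.ofReal (p z.1 - p z.2))
      = (fun x => ENNReal.ofReal (1 - p x)) ∘ Prod.snd :=
    funext fun z => by
      simp only [Pi.add_apply, Function.comp_apply, max_comm (p z.1)]
      exact ENNReal.ofReal_one_sub_max_add_ofReal_sub (hp1 z.1)
  have hdiff : Measurable fun z : E × E => ENNReal.ofReal (p z.1 - p z.2) :=
    ((hp.comp measurable_fst).sub (hp.comp measurable_snd)).ennreal_ofReal
  rw [killCoupling, Measure.map_add _ _ measurable_snd, Measure.map_add _ _ measurable_snd,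
    Measure.map_snd_prod, Measure.map_snd_prod, measure_univ (μ := R), one_smul,
    Measure.map_apply measurable_fst MeasurableSet.univ, preimage_univ,
    withDensity_apply _ MeasurableSet.univ, setLIntegral_univ, add_right_comm,
    ← Measure.map_add _ _ measurable_snd,
    ← withDensity_add_right _ hdiff, hsum,
    Measure.map_withDensity_comp _ measurable_snd (hp.const_sub 1).ennreal_ofReal, survivingPart]

lemma killedMass_map_fst (hp : Measurable p) (hp0 : ∀ z, 0 ≤ p z) (Γ : Measure (E × E)) :
    killedMass p (Γ.map Prod.fst)
      = (∫⁻ z, ENNReal.ofReal (p z.1 - p z.2) ∂Γ) + jointKillMass p Γ := by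
  have hdiff : Measurable fun z : E × E => ENNReal.ofReal (p z.1 - p z.2) :=
    ((hp.comp measurable_fst).sub (hp.comp measurable_snd)).ennreal_ofReal
  rw [killedMass, lintegral_map hp.ennreal_ofReal measurable_fst, jointKillMass,
    ← lintegral_add_left hdiff]
  exact lintegral_congr fun z => (ENNReal.ofReal_sub_add_ofReal_min (hp0 z.2)).symm

lemma killedMass_map_snd (hp : Measurable p) (hp0 : ∀ z, 0 ≤ p z) (Γ : Measure (E × E)) :
    killedMass p (Γ.map Prod.snd)
      = (∫⁻ z, ENNReal.ofReal (p z.2 - p z.1) ∂Γ) + jointKillMass p Γ := by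
  have hdiff : Measurable fun z : E × E => ENNReal.ofReal (p z.2 - p z.1) :=
    ((hp.comp measurable_snd).sub (hp.comp measurable_fst)).ennreal_ofReal
  rw [killedMass, lintegral_map hp.ennreal_ofReal measurable_snd, jointKillMass,
    ← lintegral_add_left hdiff]
  exact lintegral_congr fun z => by
    rw [min_comm]
    exact (ENNReal.ofReal_sub_add_ofReal_min (hp0 z.1)).symm

lemma jointKillMass_lt_one (hp : Measurable p) (hp0 : ∀ z, 0 ≤ p z) (hp1 : ∀ z, p z < 1)
    (Γ : Measure (E × E)) [IsProbabilityMeasure Γ] : jointKillMass p Γ < 1 :=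
  calc jointKillMass p Γ ≤ killedMass p (Γ.map Prod.fst) :=
        (killedMass_map_fst hp hp0 Γ).symm ▸ le_add_self
    _ < 1 := by
        have := Measure.isProbabilityMeasure_map (μ := Γ) measurable_fst.aemeasurable
        exact killedMass_lt_one hp1 _

lemma survivingPart_eq_smul_rebornLaw (hp1 : ∀ z, p z < 1) (ν : Measure E)
    [IsProbabilityMeasure ν] : survivingPart p ν = (1 - killedMass p ν) • rebornLaw p ν := by
  rw [rebornLaw, smul_smul, ENNReal.mul_inv_cancel (tsub_pos_of_lt (killedMass_lt_one hp1 ν)).ne'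
    (ne_top_of_le_ne_top ENNReal.one_ne_top tsub_le_self), one_smul]

lemma isProbabilityMeasure_rebornLaw (hp : Measurable p) (hp0 : ∀ z, 0 ≤ p z)
    (hp1 : ∀ z, p z < 1) (ν : Measure E) [IsProbabilityMeasure ν] :
    IsProbabilityMeasure (rebornLaw p ν) := by
  have hk := killedMass_lt_one hp1 ν
  have hS : survivingPart p ν univ = 1 - killedMass p ν := ENNReal.eq_sub_of_add_eq hk.ne_top
    (survivingPart_univ_add_killedMass hp hp0 (fun z => (hp1 z).le) ν)
  constructor
  rw [rebornLaw, Measure.smul_apply, smul_eq_mul, hS, ENNReal.inv_mul_cancel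
    (tsub_pos_of_lt hk).ne' (ne_top_of_le_ne_top ENNReal.one_ne_top tsub_le_self)]

lemma survivingPart_add_smul_rebornLaw (hp1 : ∀ z, p z < 1) (ν : Measure E)
    [IsProbabilityMeasure ν] {a q : ℝ≥0∞} (hk : killedMass p ν = a + q) :
    survivingPart p ν + a • rebornLaw p ν = (1 - q) • rebornLaw p ν := by
  have hlt : q + a < 1 := add_comm a q ▸ hk ▸ killedMass_lt_one hp1 ν
  rw [survivingPart_eq_smul_rebornLaw hp1, ← add_smul, hk, add_comm a q, ← tsub_tsub,
    tsub_add_cancel_of_le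
      (ENNReal.le_sub_of_add_le_left (ne_top_of_lt (le_self_add.trans_lt hlt)) hlt.le)]

lemma isProbabilityMeasure_rebirth (hp : Measurable p) (hp0 : ∀ z, 0 ≤ p z)
    (hp1 : ∀ z, p z < 1) (ν₀ ν₁ : Measure E) [IsProbabilityMeasure ν₀] [IsProbabilityMeasure ν₁] :
    IsProbabilityMeasure (rebirth p ν₀ ν₁) := by
  have := isProbabilityMeasure_rebornLaw hp hp0 hp1 ν₁
  constructor
  rw [rebirth, Measure.add_apply, Measure.smul_apply, measure_univ (μ := rebornLaw p ν₁),
    smul_eq_mul, mul_one, survivingPart_univ_add_killedMass hp hp0 (fun z => (hp1 z).le)]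

lemma map_fst_rebirthCoupling (hp : Measurable p) (hp0 : ∀ z, 0 ≤ p z) (hp1 : ∀ z, p z < 1)
    (ΓA ΓB : Measure (E × E)) [SFinite ΓA] [IsProbabilityMeasure ΓB] :
    (rebirthCoupling p ΓA ΓB).map Prod.fst = rebirth p (ΓA.map Prod.fst) (ΓB.map Prod.fst) := by
  have := Measure.isProbabilityMeasure_map (μ := ΓB) measurable_fst.aemeasurable
  have := Measure.isProbabilityMeasure_map (μ := ΓB) measurable_snd.aemeasurable
  have := isProbabilityMeasure_rebornLaw hp hp0 hp1 (ΓB.map Prod.snd)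
  rw [rebirthCoupling, Measure.map_add _ _ measurable_fst, Measure.map_smul,
    map_fst_killCoupling hp (fun z => (hp1 z).le), map_fst_killCoupling hp (fun z => (hp1 z).le),
    survivingPart_add_smul_rebornLaw hp1 _ (killedMass_map_fst hp hp0 ΓB), smul_smul, mul_assoc,
    ENNReal.inv_mul_cancel (tsub_pos_of_lt (jointKillMass_lt_one hp hp0 hp1 ΓB)).ne'
      (ne_top_of_le_ne_top ENNReal.one_ne_top tsub_le_self),
    mul_one, add_assoc, ← add_smul, ← killedMass_map_fst hp hp0, rebirth]

lemma map_snd_rebirthCoupling (hp : Measurable p) (hp0 : ∀ z, 0 ≤ p z) (hp1 : ∀ z, p z < 1)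
    (ΓA ΓB : Measure (E × E)) [SFinite ΓA] [IsProbabilityMeasure ΓB] :
    (rebirthCoupling p ΓA ΓB).map Prod.snd = rebirth p (ΓA.map Prod.snd) (ΓB.map Prod.snd) := by
  have := Measure.isProbabilityMeasure_map (μ := ΓB) measurable_fst.aemeasurable
  have := Measure.isProbabilityMeasure_map (μ := ΓB) measurable_snd.aemeasurable
  have := isProbabilityMeasure_rebornLaw hp hp0 hp1 (ΓB.map Prod.fst)
  have := isProbabilityMeasure_rebornLaw hp hp0 hp1 (ΓB.map Prod.snd)
  rw [rebirthCoupling, Measure.map_add _ _ measurable_snd, Measure.map_smul,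
    map_snd_killCoupling hp (fun z => (hp1 z).le), map_snd_killCoupling hp (fun z => (hp1 z).le),
    survivingPart_add_smul_rebornLaw hp1 _ (killedMass_map_snd hp hp0 ΓB), smul_smul, mul_assoc,
    ENNReal.inv_mul_cancel (tsub_pos_of_lt (jointKillMass_lt_one hp hp0 hp1 ΓB)).ne'
      (ne_top_of_le_ne_top ENNReal.one_ne_top tsub_le_self),
    mul_one, add_assoc, ← add_smul, ← killedMass_map_snd hp hp0, rebirth]

lemma rebirthCoupling_mem_coupling (hp : Measurable p) (hp0 : ∀ z, 0 ≤ p z)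
    (hp1 : ∀ z, p z < 1) {ν₀ ν₀' ν₁ ν₁' : Measure E} {ΓA ΓB : Measure (E × E)}
    (hA : ΓA ∈ Coupling ν₀ ν₀') (hB : ΓB ∈ Coupling ν₁ ν₁') :
    rebirthCoupling p ΓA ΓB ∈ Coupling (rebirth p ν₀ ν₁) (rebirth p ν₀' ν₁') := by
  obtain ⟨hAP, rfl, rfl⟩ := hA
  obtain ⟨hBP, rfl, rfl⟩ := hB
  have := Measure.isProbabilityMeasure_map (μ := ΓA) measurable_fst.aemeasurable
  have := Measure.isProbabilityMeasure_map (μ := ΓB) measurable_fst.aemeasurable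
  have := isProbabilityMeasure_rebirth hp hp0 hp1 (ΓA.map Prod.fst) (ΓB.map Prod.fst)
  have hfst := map_fst_rebirthCoupling hp hp0 hp1 ΓA ΓB
  refine ⟨?_, hfst, map_snd_rebirthCoupling hp hp0 hp1 ΓA ΓB⟩
  rw [← hfst] at this
  exact Measure.isProbabilityMeasure_of_map Prod.fst

lemma lintegral_killCoupling_le (hp : Measurable p) {c : E × E → ℝ≥0∞} (hc : Measurable c)
    {m : ℝ} (hm : ∀ z, m ≤ p z) {M κ : ℝ≥0∞} (hcM : ∀ z, c z ≤ M)
    (hLip : ∀ z, ENNReal.ofReal |p z.1 - p z.2| ≤ κ * c z)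
    (R R' : Measure E) [IsProbabilityMeasure R] [IsProbabilityMeasure R']
    (Γ : Measure (E × E)) [SFinite Γ] :
    ∫⁻ z, c z ∂(killCoupling p R R' Γ) ≤ (ENNReal.ofReal (1 - m) + M * κ) * ∫⁻ z, c z ∂Γ := by
  have hp₁ : Measurable fun z : E × E => p z.1 := hp.comp measurable_fst
  have hp₂ : Measurable fun z : E × E => p z.2 := hp.comp measurable_snd
  have hdiff : Measurable fun z : E × E => ENNReal.ofReal (p z.2 - p z.1) :=
    (hp₂.sub hp₁).ennreal_ofReal
  have mass {g : E × E → ℝ≥0∞} {f : E × E → E} (hf : Measurable f) :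
      (Γ.withDensity g).map f univ = ∫⁻ z, g z ∂Γ := by
    rw [Measure.map_apply hf MeasurableSet.univ, preimage_univ,
      withDensity_apply _ MeasurableSet.univ, setLIntegral_univ]
  have survive : ∫⁻ z, c z ∂(Γ.withDensity fun z => ENNReal.ofReal (1 - max (p z.1) (p z.2)))
      ≤ ENNReal.ofReal (1 - m) * ∫⁻ z, c z ∂Γ := by
    rw [lintegral_withDensity_eq_lintegral_mul _ ((hp₁.max hp₂).const_sub 1).ennreal_ofReal hc,
      ← lintegral_const_mul _ hc]
    refine lintegral_mono fun z => mul_le_mul_left (ENNReal.ofReal_le_ofReal ?_) _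
    linarith [hm z.1, le_max_left (p z.1) (p z.2)]
  have killed :
      ∫⁻ z, c z ∂(((Γ.withDensity fun z => ENNReal.ofReal (p z.2 - p z.1)).map Prod.fst).prod R')
        + ∫⁻ z, c z ∂(R.prod ((Γ.withDensity fun z => ENNReal.ofReal (p z.1 - p z.2)).map Prod.snd))
      ≤ M * κ * ∫⁻ z, c z ∂Γ :=
    calc _ ≤ M * ∫⁻ z, ENNReal.ofReal (p z.2 - p z.1) ∂Γ
          + M * ∫⁻ z, ENNReal.ofReal (p z.1 - p z.2) ∂Γ := by
          gcongr <;> refine (Measure.lintegral_le_mul_measure_univ hcM).trans_eq ?_ <;>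
            rw [← univ_prod_univ, Measure.prod_prod]
          · rw [measure_univ (μ := R'), mul_one, mass measurable_fst]
          · rw [measure_univ (μ := R), one_mul, mass measurable_snd]
      _ = M * ∫⁻ z, ENNReal.ofReal |p z.1 - p z.2| ∂Γ := by
          rw [← mul_add, ← lintegral_add_left hdiff]
          simp only [ENNReal.ofReal_sub_add_ofReal_sub]
      _ ≤ M * κ * ∫⁻ z, c z ∂Γ := by
          rw [mul_assoc, ← lintegral_const_mul _ hc]
          exact mul_le_mul' le_rfl (lintegral_mono hLip)
  rw [killCoupling, lintegral_add_measure, lintegral_add_measure, add_assoc, add_mul]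
  exact add_le_add survive killed

lemma lintegral_rebirthCoupling_le (hp : Measurable p) (hp0 : ∀ z, 0 ≤ p z) (hp1 : ∀ z, p z < 1)
    {c : E × E → ℝ≥0∞} (hc : Measurable c) {m : ℝ} (hm : ∀ z, m ≤ p z) {M κ : ℝ≥0∞}
    (hcM : ∀ z, c z ≤ M) (hLip : ∀ z, ENNReal.ofReal |p z.1 - p z.2| ≤ κ * c z)
    (ΓA ΓB : Measure (E × E)) [SFinite ΓA] [IsProbabilityMeasure ΓB] :
    ∫⁻ z, c z ∂(rebirthCoupling p ΓA ΓB)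
      ≤ (ENNReal.ofReal (1 - m) + M * κ) * (∫⁻ z, c z ∂ΓA
          + jointKillMass p ΓA * (1 - jointKillMass p ΓB)⁻¹ * ∫⁻ z, c z ∂ΓB) := by
  have := Measure.isProbabilityMeasure_map (μ := ΓB) measurable_fst.aemeasurable
  have := Measure.isProbabilityMeasure_map (μ := ΓB) measurable_snd.aemeasurable
  have := isProbabilityMeasure_rebornLaw hp hp0 hp1 (ΓB.map Prod.fst)
  have := isProbabilityMeasure_rebornLaw hp hp0 hp1 (ΓB.map Prod.snd)
  rw [rebirthCoupling, lintegral_add_measure, lintegral_smul_measure, smul_eq_mul, mul_add,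
    mul_left_comm]
  gcongr <;> exact lintegral_killCoupling_le hp hc hm hcM hLip _ _ _

lemma Wass_le_toReal_lintegral_of_mem_coupling {ρ : E → E → ℝ}
    (hρ : Measurable (Function.uncurry ρ)) (hρ0 : ∀ x y, 0 ≤ ρ x y) {μ ν : Measure E}
    {Γ : Measure (E × E)} (hΓ : Γ ∈ Coupling μ ν) :
    Wass ρ μ ν ≤ (∫⁻ z, ENNReal.ofReal (ρ z.1 z.2) ∂Γ).toReal := by
  rw [← integral_eq_lintegral_of_nonneg_ae (ae_of_all _ fun z => hρ0 _ _)
    hρ.aestronglyMeasurable]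
  exact csInf_le ⟨0, by rintro _ ⟨_, -, rfl⟩; exact integral_nonneg fun z => hρ0 _ _⟩ ⟨Γ, hΓ, rfl⟩

theorem Wass_rebirth_le (hp : Measurable p) (hp0 : ∀ z, 0 ≤ p z) (hp1 : ∀ z, p z < 1)
    {ρ : E → E → ℝ} (hρ : Measurable (Function.uncurry ρ)) (hρ0 : ∀ x y, 0 ≤ ρ x y)
    {m M κ : ℝ} (hm : ∀ z, m ≤ p z) (hM : 0 ≤ M) (hκ : 0 ≤ κ) (hρM : ∀ x y, ρ x y ≤ M)
    (hLip : ∀ x y, |p x - p y| ≤ κ * ρ x y)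
    {ν₀ ν₀' ν₁ ν₁' : Measure E} {ΓA ΓB : Measure (E × E)}
    (hA : ΓA ∈ Coupling ν₀ ν₀') (hB : ΓB ∈ Coupling ν₁ ν₁') :
    Wass ρ (rebirth p ν₀ ν₁) (rebirth p ν₀' ν₁')
      ≤ (1 - m + M * κ) * (∫ z, ρ z.1 z.2 ∂ΓA
          + (jointKillMass p ΓA).toReal / (1 - (jointKillMass p ΓB).toReal)
            * ∫ z, ρ z.1 z.2 ∂ΓB) := by
  have := hA.1
  have := hB.1
  obtain ⟨z₀⟩ := nonempty_of_isProbabilityMeasure ΓA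
  have hm1 : 0 ≤ 1 - m := sub_nonneg.2 ((hm z₀.1).trans (hp1 z₀.1).le)
  have hc : Measurable fun z : E × E => ENNReal.ofReal (ρ z.1 z.2) := hρ.ennreal_ofReal
  have hcM : ∀ z : E × E, ENNReal.ofReal (ρ z.1 z.2) ≤ ENNReal.ofReal M :=
    fun z => ENNReal.ofReal_le_ofReal (hρM _ _)
  have hLip' : ∀ z : E × E, ENNReal.ofReal |p z.1 - p z.2|
      ≤ ENNReal.ofReal κ * ENNReal.ofReal (ρ z.1 z.2) := fun z => by
    rw [← ENNReal.ofReal_mul hκ]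
    exact ENNReal.ofReal_le_ofReal (hLip _ _)
  have cost_eq (Γ : Measure (E × E)) :
      ∫ z, ρ z.1 z.2 ∂Γ = (∫⁻ z, ENNReal.ofReal (ρ z.1 z.2) ∂Γ).toReal :=
    integral_eq_lintegral_of_nonneg_ae (ae_of_all _ fun z => hρ0 _ _) hρ.aestronglyMeasurable
  have cost_ne_top (Γ : Measure (E × E)) [IsProbabilityMeasure Γ] :
      ∫⁻ z, ENNReal.ofReal (ρ z.1 z.2) ∂Γ ≠ ∞ :=
    ne_top_of_le_ne_top (by simp) (Measure.lintegral_le_mul_measure_univ hcM)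
  have hqA : jointKillMass p ΓA ≠ ∞ := (jointKillMass_lt_one hp hp0 hp1 ΓA).ne_top
  have hqB := jointKillMass_lt_one hp hp0 hp1 ΓB
  have hqB' : (1 - jointKillMass p ΓB)⁻¹ ≠ ∞ := ENNReal.inv_ne_top.2 (tsub_pos_of_lt hqB).ne'
  calc Wass ρ (rebirth p ν₀ ν₁) (rebirth p ν₀' ν₁')
      ≤ (∫⁻ z, ENNReal.ofReal (ρ z.1 z.2) ∂(rebirthCoupling p ΓA ΓB)).toReal :=
        Wass_le_toReal_lintegral_of_mem_coupling hρ hρ0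
          (rebirthCoupling_mem_coupling hp hp0 hp1 hA hB)
    _ ≤ ((ENNReal.ofReal (1 - m) + ENNReal.ofReal M * ENNReal.ofReal κ)
          * (∫⁻ z, ENNReal.ofReal (ρ z.1 z.2) ∂ΓA + jointKillMass p ΓA
            * (1 - jointKillMass p ΓB)⁻¹ * ∫⁻ z, ENNReal.ofReal (ρ z.1 z.2) ∂ΓB)).toReal :=
        ENNReal.toReal_mono (by simp [ENNReal.mul_eq_top, cost_ne_top, hqA, hqB'])
          (lintegral_rebirthCoupling_le hp hp0 hp1 hc hm hcM hLip' _ _)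
    _ = _ := by
        rw [← ENNReal.ofReal_mul hM, ← ENNReal.ofReal_add hm1 (mul_nonneg hM hκ),
          ENNReal.toReal_mul, ENNReal.toReal_ofReal (add_nonneg hm1 (mul_nonneg hM hκ)),
          ENNReal.toReal_add (cost_ne_top ΓA)
            (ENNReal.mul_ne_top (ENNReal.mul_ne_top hqA hqB') (cost_ne_top ΓB)),
          ENNReal.toReal_mul, ENNReal.toReal_mul, ENNReal.toReal_inv,
          ENNReal.toReal_sub_of_le hqB.le ENNReal.one_ne_top, ENNReal.toReal_one, ← cost_eq,
          ← cost_eq, div_eq_mul_inv]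

end Rebirth

section Torus

variable {d : ℕ}

lemma IsC1Drift.continuous {b : Torus d → Fin d → ℝ} (hb : IsC1Drift b) : Continuous b :=
  (IsOpenQuotientMap.piMap fun _ => QuotientAddGroup.isOpenQuotientMap_mk).continuous_comp_iff.1
    (ContDiff.continuous (𝕜 := ℝ) hb)

lemma continuous_torusProj : Continuous (Torus.proj (d := d)) :=
  continuous_pi fun i => (AddCircle.continuous_mk' 1).comp (continuous_apply i)

lemma measurable_eulerK {b : Torus d → Fin d → ℝ} (hb : Measurable b) (γ : ℝ) :
    Measurable (eulerK b γ) := by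
  have hF : Measurable fun q : Torus d × (Fin d → ℝ) =>
      q.1 + Torus.proj (fun i => γ * b q.1 i + √γ * q.2 i) :=
    measurable_fst.add <| continuous_torusProj.measurable.comp <| measurable_pi_lambda _ fun i => by
      have hb_i : Measurable fun q : Torus d × (Fin d → ℝ) => b q.1 i :=
        (measurable_pi_apply i).comp (hb.comp measurable_fst)
      have hg_i : Measurable fun q : Torus d × (Fin d → ℝ) => q.2 i :=
        (measurable_pi_apply i).comp measurable_snd
      exact (hb_i.const_mul γ).add (hg_i.const_mul √γ)
  have h : eulerK b γ = fun x => ((_root_.stdGaussian d).map (Prod.mk x)).map fun q =>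
      q.1 + Torus.proj (fun i => γ * b q.1 i + √γ * q.2 i) :=
    funext fun x => by rw [Measure.map_map hF measurable_prodMk_left]; rfl
  have : SFinite (_root_.stdGaussian d) := by unfold _root_.stdGaussian; infer_instance
  rw [h]
  exact (Measure.measurable_map _ hF).comp Measurable.map_prodMk_left

lemma continuous_tdist : Continuous fun q : Torus d × Torus d => tdist q.1 q.2 :=
  Real.continuous_sqrt.comp <| continuous_finsetSum _ fun i _ =>
    (((continuous_apply i).comp continuous_fst).dist
      ((continuous_apply i).comp continuous_snd)).pow 2

lemma tdist_nonneg (x y : Torus d) : 0 ≤ tdist x y := Real.sqrt_nonneg _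

lemma tdist_le_sqrt_div_two (x y : Torus d) : tdist x y ≤ √d / 2 := by
  have hcoord (i : Fin d) : dist (x i) (y i) ^ 2 ≤ (1 / 2) ^ 2 := by
    have h := AddCircle.norm_le_half_period (p := (1 : ℝ)) (x := x i - y i) one_ne_zero
    rw [← dist_eq_norm] at h
    exact pow_le_pow_left₀ dist_nonneg (by simpa using h) 2
  calc tdist x y ≤ √(∑ _i : Fin d, (1 / 2 : ℝ) ^ 2) :=
        Real.sqrt_le_sqrt (Finset.sum_le_sum fun i _ => hcoord i)
    _ = √d / 2 := by
        rw [Finset.sum_const, Finset.card_univ, Fintype.card_fin, nsmul_eq_mul,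
          Real.sqrt_mul (Nat.cast_nonneg d), Real.sqrt_sq (by norm_num)]
        ring

end Torus

section Rho

variable {d : ℕ} {a : ℝ}

lemma continuous_rho : Continuous fun q : Torus d × Torus d => rho a q.1 q.2 :=
  (continuous_const.sub (continuous_const.mul continuous_tdist).rexp).div_const a

lemma rho_nonneg (ha : 0 < a) (x y : Torus d) : 0 ≤ rho a x y :=
  div_nonneg (sub_nonneg.2 (Real.exp_le_one_iff.2 (by nlinarith [tdist_nonneg x y]))) ha.le

lemma rho_le_inv (ha : 0 < a) (x y : Torus d) : rho a x y ≤ a⁻¹ := by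
  rw [rho, div_eq_mul_inv]
  exact mul_le_of_le_one_left (inv_nonneg.2 ha.le) (sub_le_self 1 (Real.exp_pos _).le)

lemma div_mul_one_sub_exp_neg_le {t T : ℝ} (a : ℝ) (hT : 0 < T) (ht : 0 ≤ t) (htT : t ≤ T) :
    t / T * (1 - Real.exp (-a * T)) ≤ 1 - Real.exp (-a * t) := by
  have h := convexOn_exp.2 (mem_univ 0) (mem_univ (-a * T)) (sub_nonneg.2 ((div_le_one hT).2 htT))
    (div_nonneg ht hT.le) (sub_add_cancel 1 (t / T))
  simp only [smul_eq_mul, mul_zero, zero_add, Real.exp_zero, mul_one] at h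
  rw [show t / T * (-a * T) = -a * t by field_simp] at h
  linarith

/-- `β` is the slope of the chord of the concave function `t ↦ (1 - exp (-a t)) / a` over
`[0, √d / 2]`, and `√d / 2` is the diameter of the torus. -/
lemma tdist_le_inv_mul_rho (ha : 0 < a) (x y : Torus d) :
    tdist x y ≤ (2 * (1 - Real.exp (-a * √d / 2)) / (a * √d))⁻¹ * rho a x y := by
  rcases Nat.eq_zero_or_pos d with rfl | hd
  · simp [tdist]
  have hT : 0 < √d / 2 := by positivity
  have hβ : 0 < 2 * (1 - Real.exp (-a * √d / 2)) / (a * √d) :=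
    div_pos (by nlinarith [Real.exp_lt_one_iff.2 (by nlinarith : -a * √d / 2 < 0)]) (by positivity)
  rw [le_inv_mul_iff₀ hβ, rho, le_div_iff₀ ha]
  calc 2 * (1 - Real.exp (-a * √d / 2)) / (a * √d) * tdist x y * a
      = tdist x y / (√d / 2) * (1 - Real.exp (-a * (√d / 2))) := by
        field_simp
    _ ≤ 1 - Real.exp (-a * tdist x y) :=
        div_mul_one_sub_exp_neg_le a hT (tdist_nonneg x y) (tdist_le_sqrt_div_two x y)

end Rho

lemma Real.abs_exp_neg_sub_exp_neg_le {u v : ℝ} (hu : 0 ≤ u) (hv : 0 ≤ v) :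
    |Real.exp (-u) - Real.exp (-v)| ≤ |u - v| := by
  wlog h : u ≤ v generalizing u v
  · rw [abs_sub_comm, abs_sub_comm u]
    exact this hv hu (le_of_not_ge h)
  have hchord : Real.exp (-u) * (u - v + 1) ≤ Real.exp (-v) := by
    rw [show -v = -u + (u - v) by ring, Real.exp_add]
    exact mul_le_mul_of_nonneg_left (Real.add_one_le_exp _) (Real.exp_pos _).le
  rw [abs_of_nonneg (sub_nonneg.2 (Real.exp_le_exp.2 (neg_le_neg h))), abs_of_nonpos (by linarith)]
  nlinarith [Real.exp_le_one_iff.2 (neg_nonpos.2 hu)]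

section Killing

variable {d : ℕ} {lam : Torus d → ℝ} {γ : ℝ}

lemma pkill_nonneg (hγ : 0 ≤ γ) (hlam0 : ∀ z, 0 ≤ lam z) (z : Torus d) : 0 ≤ pkill lam γ z :=
  sub_nonneg.2 (Real.exp_le_one_iff.2 (neg_nonpos.2 (mul_nonneg hγ (hlam0 z))))

lemma pkill_lt_one (z : Torus d) : pkill lam γ z < 1 := sub_lt_self 1 (Real.exp_pos _)

lemma continuous_pkill (hlam : Continuous lam) : Continuous (pkill lam γ) := by
  unfold pkill
  fun_prop

lemma abs_pkill_sub_le_mul_rho (hγ : 0 ≤ γ) (hlam0 : ∀ z, 0 ≤ lam z) {L : ℝ} (hL : 0 ≤ L)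
    (hLip : LipDrift L lam) {a : ℝ} (ha : 0 < a) (x y : Torus d) :
    |pkill lam γ x - pkill lam γ y|
      ≤ γ * L * (2 * (1 - Real.exp (-a * √d / 2)) / (a * √d))⁻¹ * rho a x y :=
  calc |pkill lam γ x - pkill lam γ y|
      = |Real.exp (-(γ * lam y)) - Real.exp (-(γ * lam x))| := by
        rw [pkill, pkill, sub_sub_sub_cancel_left]
    _ ≤ |γ * lam y - γ * lam x| :=
        Real.abs_exp_neg_sub_exp_neg_le (mul_nonneg hγ (hlam0 y)) (mul_nonneg hγ (hlam0 x))
    _ = γ * |lam x - lam y| := by rw [← mul_sub, abs_mul, abs_of_nonneg hγ, abs_sub_comm]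
    _ ≤ γ * (L * tdist x y) := mul_le_mul_of_nonneg_left (hLip x y) hγ
    _ ≤ γ * (L * ((2 * (1 - Real.exp (-a * √d / 2)) / (a * √d))⁻¹ * rho a x y)) := by
        gcongr
        exact tdist_le_inv_mul_rho ha x y
    _ = _ := by ring

end Killing

section Qker

variable {d : ℕ} {b : Torus d → Fin d → ℝ} {lam : Torus d → ℝ} {γ : ℝ}

lemma Qker_apply (μ₁ : Measure (Torus d)) (x : Torus d) {s : Set (Torus d)} (hs : MeasurableSet s) :
    Qker b lam γ μ₁ x s
      = ∫⁻ z, s.indicator (fun z => ENNReal.ofReal (1 - pkill lam γ z)) z ∂(eulerK b γ x)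
        + killedMass (pkill lam γ) (eulerK b γ x)
          * rebornLaw (pkill lam γ) (μ₁.bind (eulerK b γ)) s := by
  simp only [Qker, rebornLaw, survivingPart, killedMass, Measure.add_apply, Measure.smul_apply,
    smul_eq_mul, ENNReal.tsum_geometric, withDensity_apply _ hs, lintegral_indicator hs, mul_assoc]

lemma measurable_Qker (hK : Measurable (eulerK b γ)) (hp : Measurable (pkill lam γ))
    (μ₁ : Measure (Torus d)) : Measurable (Qker b lam γ μ₁) := by
  refine Measure.measurable_of_measurable_coe _ fun s hs => ?_
  simp_rw [Qker_apply μ₁ _ hs]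
  exact ((Measure.measurable_lintegral ((hp.const_sub 1).ennreal_ofReal.indicator hs)).comp hK).add
    (((Measure.measurable_lintegral hp.ennreal_ofReal).comp hK).mul_const _)

lemma bind_Qker (hK : Measurable (eulerK b γ)) (hp : Measurable (pkill lam γ))
    (μ₀ μ₁ : Measure (Torus d)) :
    μ₀.bind (Qker b lam γ μ₁)
      = rebirth (pkill lam γ) (μ₀.bind (eulerK b γ)) (μ₁.bind (eulerK b γ)) := by
  have hf := ((hp.const_sub 1).ennreal_ofReal (f := fun z => 1 - pkill lam γ z))
  ext s hs
  have hsurv : Measurable fun x => ∫⁻ z, s.indicator (fun z => ENNReal.ofReal (1 - pkill lam γ z)) z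
      ∂(eulerK b γ x) := (Measure.measurable_lintegral (hf.indicator hs)).comp hK
  have hkill : Measurable fun x => killedMass (pkill lam γ) (eulerK b γ x) :=
    (Measure.measurable_lintegral hp.ennreal_ofReal).comp hK
  simp_rw [Measure.bind_apply hs (measurable_Qker hK hp μ₁).aemeasurable, Qker_apply μ₁ _ hs]
  rw [lintegral_add_left hsurv, lintegral_mul_const _ hkill,
    ← Measure.lintegral_bind hK.aemeasurable (hf.indicator hs).aemeasurable,
    rebirth, Measure.add_apply, Measure.smul_apply, smul_eq_mul, survivingPart,
    withDensity_apply _ hs, lintegral_indicator hs, killedMass,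
    Measure.lintegral_bind hK.aemeasurable hp.ennreal_ofReal.aemeasurable]
  rfl

end Qker

section Probability

variable {Ω E : Type*} [MeasurableSpace Ω] [MeasurableSpace E] {P : Measure Ω}

lemma map_prodMk_mem_coupling [IsProbabilityMeasure P] {X Y : Ω → E} (hX : Measurable X)
    (hY : Measurable Y) : P.map (fun ω => (X ω, Y ω)) ∈ Coupling (P.map X) (P.map Y) :=
  ⟨Measure.isProbabilityMeasure_map (hX.prodMk hY).aemeasurable,
    by rw [Measure.map_map measurable_fst (hX.prodMk hY)]; rfl,
    by rw [Measure.map_map measurable_snd (hX.prodMk hY)]; rfl⟩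

lemma measure_lt_eq_lintegral_of_indepFun_unifLaw [IsFiniteMeasure P] {V : Ω → E} {U : Ω → ℝ}
    (hV : Measurable V) (hUm : Measurable U) (hU : P.map U = unifLaw) (hind : IndepFun V U P)
    {F : E → ℝ} (hF : Measurable F) (hF1 : ∀ v, F v ≤ 1) :
    P {ω | U ω < F (V ω)} = ∫⁻ v, ENNReal.ofReal (F v) ∂(P.map V) := by
  have : IsFiniteMeasure unifLaw := ⟨by simp [unifLaw]⟩
  have hS : MeasurableSet {q : E × ℝ | q.2 < F q.1} :=
    measurableSet_lt measurable_snd (hF.comp measurable_fst)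
  rw [show {ω | U ω < F (V ω)} = (fun ω => (V ω, U ω)) ⁻¹' {q | q.2 < F q.1} from rfl,
    ← Measure.map_apply (hV.prodMk hUm) hS,
    (indepFun_iff_map_prod_eq_prod_map_map hV.aemeasurable hUm.aemeasurable).1 hind, hU,
    Measure.prod_apply hS]
  refine lintegral_congr fun v => ?_
  rw [show Prod.mk v ⁻¹' {q : E × ℝ | q.2 < F q.1} = Iio (F v) from rfl, unifLaw,
    Measure.restrict_apply measurableSet_Iio,
    show Iio (F v) ∩ Icc 0 1 = Ico 0 (F v) by
      ext u; simp only [mem_inter_iff, mem_Iio, mem_Icc, mem_Ico]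
      constructor
      · rintro ⟨h, h0, -⟩; exact ⟨h0, h⟩
      · rintro ⟨h0, h⟩; exact ⟨h, h0, h.le.trans (hF1 v)⟩,
    Real.volume_Ico, sub_zero]

lemma measure_lt_min_eq_jointKillMass [IsFiniteMeasure P] {p : E → ℝ} (hp : Measurable p)
    (hp1 : ∀ z, p z ≤ 1) {X Y : Ω → E} {U : Ω → ℝ} (hX : Measurable X) (hY : Measurable Y)
    (hUm : Measurable U) (hU : P.map U = unifLaw) (hind : IndepFun (fun ω => (X ω, Y ω)) U P) :
    P {ω | U ω < min (p (X ω)) (p (Y ω))} = jointKillMass p (P.map fun ω => (X ω, Y ω)) :=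
  measure_lt_eq_lintegral_of_indepFun_unifLaw (hX.prodMk hY) hUm hU hind
    ((hp.comp measurable_fst).min (hp.comp measurable_snd)) fun z => (min_le_left _ _).trans (hp1 z.1)

end Probability

theorem basic_coupling_estimate_general
    {d : ℕ} (b : Torus d → Fin d → ℝ) (hb : IsC1Drift b)
    (lam : Torus d → ℝ) (hlamc : Continuous lam) (hlam0 : ∀ z, 0 ≤ lam z)
    (L : ℝ) (hL : 0 ≤ L) (hLip : LipDrift L lam)
    (a γ : ℝ) (ha : 0 < a) (hγ : 0 < γ)
    (μ0 μ1 μ0' μ1' : Measure (Torus d))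
    {Ω : Type*} [MeasurableSpace Ω] (P : Measure Ω) (hP : IsProbabilityMeasure P)
    (X0 X0' X1 X1' : Ω → Torus d) (U : Ω → ℝ)
    (hX0m : Measurable X0) (hX0'm : Measurable X0')
    (hX1m : Measurable X1) (hX1'm : Measurable X1') (hUm : Measurable U)
    (hX0 : P.map X0 = μ0.bind (eulerK b γ)) (hX0' : P.map X0' = μ0'.bind (eulerK b γ))
    (hX1 : P.map X1 = μ1.bind (eulerK b γ)) (hX1' : P.map X1' = μ1'.bind (eulerK b γ))
    (hU : P.map U = unifLaw)
    (hindepU : IndepFun (fun ω => (X0 ω, X0' ω, X1 ω, X1' ω)) U P) :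
    Wass (rho a) (μ0.bind (Qker b lam γ μ1)) (μ0'.bind (Qker b lam γ μ1'))
      ≤ (1 - (⨅ z, pkill lam γ z)
            + (a * (2 * (1 - Real.exp (-a * Real.sqrt d / 2)) / (a * Real.sqrt d)))⁻¹ * γ * L)
        * ((∫ ω, rho a (X0 ω) (X0' ω) ∂P)
            + (P {ω | U ω < min (pkill lam γ (X0 ω)) (pkill lam γ (X0' ω))}).toReal
              / (1 - (P {ω | U ω < min (pkill lam γ (X1 ω)) (pkill lam γ (X1' ω))}).toReal)
              * ∫ ω, rho a (X1 ω) (X1' ω) ∂P) := by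
  set β := 2 * (1 - Real.exp (-a * Real.sqrt d / 2)) / (a * Real.sqrt d)
  have hβ : 0 ≤ β := div_nonneg (mul_nonneg zero_le_two
    (sub_nonneg.2 (Real.exp_le_one_iff.2 (by nlinarith [Real.sqrt_nonneg d])))) (by positivity)
  have hp := (continuous_pkill (γ := γ) hlamc).measurable
  have hp0 := pkill_nonneg hγ.le hlam0
  have hK := measurable_eulerK hb.continuous.measurable γ
  have hp1 : ∀ z, pkill lam γ z ≤ 1 := fun z => (pkill_lt_one z).le
  have hq0 := measure_lt_min_eq_jointKillMass hp hp1 hX0m hX0'm hUm hU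
    (hindepU.comp (measurable_fst.prodMk (measurable_fst.comp measurable_snd)) measurable_id)
  have hq1 := measure_lt_min_eq_jointKillMass hp hp1 hX1m hX1'm hUm hU
    (hindepU.comp (measurable_snd.comp measurable_snd) measurable_id)
  have hcost {X Y : Ω → Torus d} (hX : Measurable X) (hY : Measurable Y) :
      ∫ ω, rho a (X ω) (Y ω) ∂P = ∫ z, rho a z.1 z.2 ∂(P.map fun ω => (X ω, Y ω)) :=
    (integral_map (hX.prodMk hY).aemeasurable continuous_rho.aestronglyMeasurable).symm
  rw [bind_Qker hK hp, bind_Qker hK hp, hq0, hq1, hcost hX0m hX0'm, hcost hX1m hX1'm]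
  convert Wass_rebirth_le hp hp0 pkill_lt_one continuous_rho.measurable (rho_nonneg ha)
    (fun z => ciInf_le ⟨0, forall_mem_range.2 hp0⟩ z) (inv_nonneg.2 ha.le)
    (by positivity : 0 ≤ γ * L * β⁻¹) (rho_le_inv ha)
    (abs_pkill_sub_le_mul_rho hγ.le hlam0 hL hLip ha)
    (hX0 ▸ hX0' ▸ map_prodMk_mem_coupling hX0m hX0'm)
    (hX1 ▸ hX1' ▸ map_prodMk_mem_coupling hX1m hX1'm) using 2
  rw [mul_inv]
  ring

/-- The basic coupling estimate: if `(X₀,X₀')` is a coupling of `μ₀K, μ₀'K`, `(X₁,X₁')` a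
coupling of `μ₁K, μ₁'K`, independent of each other, and `U ~ U([0,1])` independent of them, then
`W_ρ(μ₀ Q_{μ₁}, μ₀' Q_{μ₁'}) ≤ h (E[ρ(X₀,X₀')] + q₀/(1−q₁) E[ρ(X₁,X₁')])` where
`h = 1 − min p + (aβ)⁻¹ γ L_λ` and `q_i = P(U < p(X_i) ∧ p(X_i'))`. -/
theorem basic_coupling_estimate
    {d : ℕ} (b : Torus d → Fin d → ℝ) (hb : IsC1Drift b)
    (lam : Torus d → ℝ) (hlamc : Continuous lam) (hlam0 : ∀ z, 0 ≤ lam z)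
    (L : ℝ) (hL : 0 ≤ L) (hLip : LipDrift L lam)
    (a γ : ℝ) (ha : 0 < a) (hγ : 0 < γ)
    (μ0 μ1 μ0' μ1' : Measure (Torus d))
    (hμ0 : IsProbabilityMeasure μ0) (hμ1 : IsProbabilityMeasure μ1)
    (hμ0' : IsProbabilityMeasure μ0') (hμ1' : IsProbabilityMeasure μ1')
    {Ω : Type*} [MeasurableSpace Ω] (P : Measure Ω) (hP : IsProbabilityMeasure P)
    (X0 X0' X1 X1' : Ω → Torus d) (U : Ω → ℝ)
    (hX0m : Measurable X0) (hX0'm : Measurable X0')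
    (hX1m : Measurable X1) (hX1'm : Measurable X1') (hUm : Measurable U)
    (hX0 : P.map X0 = μ0.bind (eulerK b γ)) (hX0' : P.map X0' = μ0'.bind (eulerK b γ))
    (hX1 : P.map X1 = μ1.bind (eulerK b γ)) (hX1' : P.map X1' = μ1'.bind (eulerK b γ))
    (hU : P.map U = unifLaw)
    (hindep01 : IndepFun (fun ω => (X0 ω, X0' ω)) (fun ω => (X1 ω, X1' ω)) P)
    (hindepU : IndepFun (fun ω => (X0 ω, X0' ω, X1 ω, X1' ω)) U P) :
    Wass (rho a) (μ0.bind (Qker b lam γ μ1)) (μ0'.bind (Qker b lam γ μ1'))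
      ≤ (1 - (⨅ z, pkill lam γ z)
            + (a * (2 * (1 - Real.exp (-a * Real.sqrt d / 2)) / (a * Real.sqrt d)))⁻¹ * γ * L)
        * ((∫ ω, rho a (X0 ω) (X0' ω) ∂P)
            + (P {ω | U ω < min (pkill lam γ (X0 ω)) (pkill lam γ (X0' ω))}).toReal
              / (1 - (P {ω | U ω < min (pkill lam γ (X1 ω)) (pkill lam γ (X1' ω))}).toReal)
              * ∫ ω, rho a (X1 ω) (X1' ω) ∂P) :=
  basic_coupling_estimate_general b hb lam hlamc hlam0 L hL hLip a γ ha hγ μ0 μ1 μ0' μ1' P hP X0 X0'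
    X1 X1' U hX0m hX0'm hX1m hX1'm hUm hX0 hX0' hX1 hX1' hU hindepU

end
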